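/- For a supported permutation set X, the atoms-abstraction set [𝔸]X = {[a]x | a ∈ 𝔸, x ∈ X}, with permutation action π·[a]x = [π(a)](π·x), is a well-defined supported permutation set, and supp([a]x) = supp(x) \ {a}. -/

import Mathlib

abbrev Atom := ℕ

def FinPermGroup : Subgroup (Equiv.Perm Atom) where
  carrier := {π | {a | π a ≠ a}.Finite}
  one_mem' := by simp
  mul_mem' := by
    intro π π' hπ hπ'
    refine Set.Finite.subset (Set.Finite.union hπ hπ') fun a ha => ?_
    by_contra h
    simp only [Set.mem_union, Set.mem_setOf_eq, not_or, not_not] at h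
    exact ha (show π (π' a) = a by rw [h.2, h.1])
  inv_mem' := by
    intro π hπ
    have h : {a | π⁻¹ a ≠ a} = {a | π a ≠ a} := by
      ext a
      simp only [Set.mem_setOf_eq, ne_eq, not_iff_not]
      rw [Equiv.Perm.inv_eq_iff_eq, eq_comm]
    show {a | π⁻¹ a ≠ a}.Finite
    rw [h]; exact hπ

abbrev FinPerm : Type := FinPermGroup

def PSupports {X : Type*} [MulAction FinPerm X] (A : Set Atom) (x : X) : Prop :=
  ∀ π π' : FinPerm, (∀ a ∈ A, π.1 a = π'.1 a) → π • x = π' • x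

def PIsLeastSupport {X : Type*} [MulAction FinPerm X] (S : Set Atom) (x : X) : Prop :=
  PSupports S x ∧ ∀ A, PSupports A x → S ⊆ A

def IsPermissionSet (S : Set Atom) : Prop :=
  ∃ A B : Finset Atom, (↑A : Set Atom) ⊆ {n | n % 2 = 1} ∧ (↑B : Set Atom) ⊆ {n | n % 2 = 0} ∧
    S = ({n : Atom | n % 2 = 0} ∪ ↑A) \ ↑B

def swapPerm (a b : Atom) : FinPerm :=
  ⟨Equiv.swap a b, by
    show {c | Equiv.swap a b c ≠ c}.Finite
    apply Set.Finite.subset ((Set.finite_singleton b).insert a)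
    intro c hc
    by_contra hn
    simp only [Set.mem_insert_iff, Set.mem_singleton_iff, not_or] at hn
    exact hc (Equiv.swap_apply_of_ne_of_ne hn.1 hn.2)⟩

instance : SMul FinPerm Atom := ⟨fun π a => π.1 a⟩
instance : MulAction FinPerm Atom where
  one_smul _ := rfl
  mul_smul _ _ _ := rfl

/-- Atoms-abstraction in a permutation set: `[a]x`. -/
def pabs {X : Type*} [MulAction FinPerm X] (supp : X → Set Atom) (a : Atom) (x : X) :
    Set (Atom × X) :=
  {p | p = (a, x)} ∪ {p | ∃ b, b ∉ supp x ∧ p = (b, swapPerm b a • x)}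

/-!
Writing `[a]x = {(c, (c a)·x) | c = a ∨ c ∉ supp x}` and using `supp (π·x) = π(supp x)`,
equivariance of abstraction is conjugation of swaps: `π (c a) π⁻¹ = (πc πa)`.
A permutation `σ` fixing `supp x \ {a}` acts on `x` as the swap `(σa a)`, and either `σa = a`
or `σa` is fresh for `x`; α-equivalence `[b]((b a)·x) = [a]x` for fresh `b` then shows that `σ`
fixes `[a]x`. Conversely, if `A` supports `[a]x` and `σ` fixes `A ∪ {a}`, then `σ` maps `(a, x)`
to `(a, σ·x) ∈ [a]x`, which forces `σ·x = x`; so `supp x ⊆ A ∪ {a}`.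
-/

open Pointwise

theorem Equiv.swap_apply_swap_apply_of_ne {α : Type*} [DecidableEq α] {a b c e : α}
    (heb : e ≠ b) (hec : e = c → e = a) : swap c b (swap b a e) = swap c a e := by
  simp only [swap_apply_def]
  grind

theorem Equiv.Perm.apply_eq_or_notMem_of_forall_mem_diff {α : Type*} {S : Set α} {a : α}
    {σ : Equiv.Perm α} (hσ : ∀ e ∈ S \ {a}, σ e = e) : σ a = a ∨ σ a ∉ S := by
  by_contra! h
  exact h.1 (σ.injective (hσ _ ⟨h.2, h.1⟩))

namespace FinPerm

theorem ext {π π' : FinPerm} (h : ∀ a, π.1 a = π'.1 a) : π = π' :=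
  Subtype.ext (Equiv.ext h)

@[simp] theorem smul_atom (π : FinPerm) (a : Atom) : π • a = π.1 a := rfl

end FinPerm

@[simp] theorem val_swapPerm (a b : Atom) : (swapPerm a b).1 = Equiv.swap a b := rfl

@[simp] theorem swapPerm_self (a : Atom) : swapPerm a a = 1 :=
  FinPerm.ext fun c => by simp

theorem smul_swapPerm_smul {X : Type*} [MulAction FinPerm X] (π : FinPerm) (a b : Atom) (x : X) :
    π • swapPerm a b • x = swapPerm (π.1 a) (π.1 b) • π • x := by
  have hconj : π * swapPerm a b = swapPerm (π.1 a) (π.1 b) * π :=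
    FinPerm.ext fun c => by simp [Equiv.swap_apply_apply]
  rw [smul_smul, hconj, mul_smul]

section Supports

variable {X : Type*} [MulAction FinPerm X]

theorem pSupports_iff_supports {A : Set Atom} {x : X} :
    PSupports A x ↔ MulAction.Supports FinPerm A x := by
  refine ⟨fun h σ hσ => by simpa using h σ 1 fun a ha => by simpa using hσ ha,
    fun h π π' hag => ?_⟩
  have hfix : (π'⁻¹ * π) • x = x := h _ fun a ha => by simp [hag a ha]
  rw [← inv_smul_eq_iff, smul_smul, hfix]

theorem PSupports.smul {A : Set Atom} {x : X} (h : PSupports A x) (π : FinPerm) :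
    PSupports (π.1 '' A) (π • x) := fun τ τ' hag => by
  simpa only [mul_smul] using h (τ * π) (τ' * π) fun a ha => hag _ ⟨a, ha, rfl⟩

theorem PSupports.smul_eq_swapPerm_smul {S : Set Atom} {a : Atom} {x : X} (hx : PSupports S x)
    {σ : FinPerm} (hσ : ∀ e ∈ S \ {a}, σ.1 e = e) : σ • x = swapPerm (σ.1 a) a • x := by
  refine hx _ _ fun e he => ?_
  rcases eq_or_ne e a with rfl | hea
  · simp
  have hfix := hσ e ⟨he, hea⟩
  have heσa : e ≠ σ.1 a := fun h => hea (σ.1.injective (hfix.trans h))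
  rw [hfix, val_swapPerm, Equiv.swap_apply_of_ne_of_ne heσa hea]

end Supports

section Abstraction

variable {X : Type*} [MulAction FinPerm X] {supp : X → Set Atom}

theorem supp_smul (hsupp : ∀ x, PIsLeastSupport (supp x) x) (π : FinPerm) (x : X) :
    supp (π • x) = π.1 '' supp x := by
  have hsub : ∀ (π : FinPerm) (x : X), supp (π • x) ⊆ π.1 '' supp x :=
    fun π x => (hsupp _).2 _ ((hsupp x).1.smul π)
  refine (hsub π x).antisymm fun c ⟨d, hd, hdc⟩ => ?_
  have hinv := hsub π⁻¹ (π • x)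
  rw [inv_smul_smul] at hinv
  obtain ⟨e, he, rfl⟩ := hinv hd
  simpa [← hdc] using he

-- The pair `(a, x)` is the `c = a` instance of the second clause, since `(a a) = 1`.
theorem mem_pabs_iff {a c : Atom} {x y : X} :
    (c, y) ∈ pabs supp a x ↔ (c = a ∨ c ∉ supp x) ∧ y = swapPerm c a • x := by
  simp only [pabs, Set.mem_union, Set.mem_setOf_eq, Prod.mk.injEq]
  constructor
  · rintro (⟨rfl, rfl⟩ | ⟨b, hb, rfl, rfl⟩)
    · simp
    · exact ⟨Or.inr hb, rfl⟩
  · rintro ⟨rfl | hc, rfl⟩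
    · simp
    · exact Or.inr ⟨c, hc, rfl, rfl⟩

theorem smul_mem_pabs_iff (hsupp : ∀ x, PIsLeastSupport (supp x) x) (π : FinPerm) (a : Atom)
    (x : X) (p : Atom × X) : π • p ∈ pabs supp (π.1 a) (π • x) ↔ p ∈ pabs supp a x := by
  obtain ⟨c, y⟩ := p
  rw [Prod.smul_mk, FinPerm.smul_atom, mem_pabs_iff, mem_pabs_iff, supp_smul hsupp,
    π.1.injective.eq_iff, π.1.injective.mem_set_image, ← smul_swapPerm_smul, smul_left_cancel_iff]

theorem smul_pabs (hsupp : ∀ x, PIsLeastSupport (supp x) x) (π : FinPerm) (a : Atom) (x : X) :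
    π • pabs supp a x = pabs supp (π.1 a) (π • x) := by
  ext p
  rw [Set.mem_smul_set_iff_inv_smul_mem, ← smul_mem_pabs_iff hsupp π, smul_inv_smul]

theorem pabs_swapPerm_smul (hsupp : ∀ x, PIsLeastSupport (supp x) x) {a b : Atom} {x : X}
    (hb : b ∉ supp x) : pabs supp b (swapPerm b a • x) = pabs supp a x := by
  ext ⟨c, y⟩
  have hcond : (c = b ∨ c ∉ supp (swapPerm b a • x)) ↔ (c = a ∨ c ∉ supp x) := by
    simp only [supp_smul hsupp, Set.mem_image_equiv, val_swapPerm, Equiv.symm_swap]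
    rcases eq_or_ne c a with rfl | hca
    · simp [hb]
    rcases eq_or_ne c b with rfl | hcb
    · simp [hb]
    simp [Equiv.swap_apply_of_ne_of_ne hcb hca, hca, hcb]
  rw [mem_pabs_iff, mem_pabs_iff, hcond, smul_smul]
  refine and_congr_right fun hc => ?_
  suffices (swapPerm c b * swapPerm b a) • x = swapPerm c a • x by rw [this]
  refine (hsupp x).1 _ _ fun e he => ?_
  have heb : e ≠ b := fun h => hb (h ▸ he)
  have hec : e = c → e = a := by rintro rfl; exact hc.resolve_right (not_not_intro he)
  simpa using Equiv.swap_apply_swap_apply_of_ne heb hec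

theorem pSupports_pabs (hsupp : ∀ x, PIsLeastSupport (supp x) x) (a : Atom) (x : X) :
    PSupports (supp x \ {a}) (pabs supp a x) := by
  rw [pSupports_iff_supports]
  intro σ hσ
  rw [smul_pabs hsupp, (hsupp x).1.smul_eq_swapPerm_smul fun e he => hσ he]
  rcases σ.1.apply_eq_or_notMem_of_forall_mem_diff (fun e he => hσ he) with h | h
  · rw [h, swapPerm_self, one_smul]
  · exact pabs_swapPerm_smul hsupp h

theorem diff_subset_of_pSupports_pabs (hsupp : ∀ x, PIsLeastSupport (supp x) x) {a : Atom}
    {x : X} {A : Set Atom} (hA : PSupports A (pabs supp a x)) : supp x \ {a} ⊆ A := by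
  rw [Set.sdiff_subset_iff]
  refine (hsupp x).2 _ (pSupports_iff_supports.2 fun σ hσ => ?_)
  have hσa : σ.1 a = a := hσ (Or.inl rfl)
  have hfix : σ • pabs supp a x = pabs supp a x :=
    pSupports_iff_supports.1 hA σ fun e he => hσ (Or.inr he)
  have hmem : (a, σ • x) ∈ pabs supp a x := by
    rw [← hfix, smul_pabs hsupp, hσa]
    exact mem_pabs_iff.2 ⟨Or.inl rfl, by simp⟩
  simpa using (mem_pabs_iff.1 hmem).2

theorem pIsLeastSupport_pabs (hsupp : ∀ x, PIsLeastSupport (supp x) x) (a : Atom) (x : X) :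
    PIsLeastSupport (supp x \ {a}) (pabs supp a x) :=
  ⟨pSupports_pabs hsupp a x, fun _ => diff_subset_of_pSupports_pabs hsupp⟩

end Abstraction

open Pointwise in
theorem stmt12 {X : Type*} [MulAction FinPerm X] (supp : X → Set Atom)
    (hsupp : ∀ x, PIsLeastSupport (supp x) x) (a : Atom) (x : X) (π : FinPerm) :
    π • pabs supp a x = pabs supp (π.1 a) (π • x) ∧
    PIsLeastSupport (supp x \ {a}) (pabs supp a x) :=
  ⟨smul_pabs hsupp π a x, pIsLeastSupport_pabs hsupp a x⟩
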